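/- Let G be a 3-edge-connected graph with DFS tree T rooted at r, and let u ≠ r be a vertex with back-edge set B(u). Then for two back-edges e, e' ∈ B(u): the set {(u,p(u)), e, e'} is a 3-edge cut of G if and only if B(u) = {e, e'}. -/

import Mathlib

variable {V E : Type}

/-- Reachability in the multigraph with edge-endpoint map `ends`,
avoiding (i.e. after deleting) the edges in `S`. -/
def Reach (ends : E → V × V) (S : Set E) : V → V → Prop :=
  Relation.ReflTransGen (fun a b => ∃ e, e ∉ S ∧ (ends e = (a, b) ∨ ends e = (b, a)))

/-- The multigraph is connected. -/
def Connected (ends : E → V × V) : Prop := ∀ u v : V, Reach ends ∅ u v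

/-- `u` and `v` are `k`-edge-connected: no set of at most `k - 1` edges separates them. -/
def KConn (ends : E → V × V) (k : ℕ) (u v : V) : Prop :=
  ∀ S : Finset E, S.card ≤ k - 1 → Reach ends (↑S) u v

/-- The multigraph is `k`-edge-connected: no edge cut of size less than `k`. -/
def GraphKConn (ends : E → V × V) (k : ℕ) : Prop :=
  ∀ S : Finset E, S.card < k → ∀ u v : V, Reach ends (↑S) u v

/-- `S` is an edge cut: removing it disconnects the graph. -/
def IsCutSet (ends : E → V × V) (S : Set E) : Prop :=
  ∃ u v : V, ¬ Reach ends S u v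

/-- A (candidate) DFS tree on the multigraph `ends : E → V × V`: a root, a parent
function, a choice of a tree edge for each non-root vertex, and a preorder numbering. -/
structure DFSTree (V E : Type) where
  ends : E → V × V
  root : V
  parent : V → V
  treeEdge : V → E
  pre : V → ℕ

namespace DFSTree

variable (t : DFSTree V E)

/-- `t.Anc a b` : `a` is an ancestor of `b` (every vertex is an ancestor of itself). -/
def Anc (a b : V) : Prop :=
  Relation.ReflTransGen (fun x y => x ≠ t.root ∧ y = t.parent x) b a

/-- `a` is a proper ancestor of `b`. -/
def ProperAnc (a b : V) : Prop := t.Anc a b ∧ a ≠ b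

def IsTreeEdge (e : E) : Prop := ∃ v, v ≠ t.root ∧ e = t.treeEdge v

/-- The set `B(v)`: back-edges `(x, y)` with `x` a descendant of `v` and `y` a
proper ancestor of `v`. -/
def B (v : V) : Set E :=
  {e | ¬ t.IsTreeEdge e ∧ t.Anc v (t.ends e).1 ∧ t.ProperAnc (t.ends e).2 v}

/-- `m` is the nearest common ancestor of the set `S` of vertices. -/
def IsNCA (S : Set V) (m : V) : Prop :=
  (∀ x ∈ S, t.Anc m x) ∧ ∀ m' : V, (∀ x ∈ S, t.Anc m' x) → t.Anc m' m

/-- `m = M(v)`: the nearest common ancestor of all lower ends of back-edges in `B(v)`. -/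
def IsM (v m : V) : Prop := t.IsNCA {x | ∃ e ∈ t.B v, (t.ends e).1 = x} m

/-- `h = high(v)`: the highest (in preorder) upper end of a back-edge in `B(v)`. -/
def IsHigh (v h : V) : Prop :=
  (∃ e ∈ t.B v, (t.ends e).2 = h) ∧ ∀ e ∈ t.B v, t.pre (t.ends e).2 ≤ t.pre h

/-- `l = low(v)`: the lowest (in preorder) upper end of a back-edge in `B(v)`. -/
def IsLow (v l : V) : Prop :=
  (∃ e ∈ t.B v, (t.ends e).2 = l) ∧ ∀ e ∈ t.B v, t.pre l ≤ t.pre (t.ends e).2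

/-- `v` and `w` have the same `M`-value. -/
def SameM (v w : V) : Prop := ∃ m, t.IsM v m ∧ t.IsM w m

/-- `n = nextM(v)`: the greatest vertex smaller than `v` with the same `M`-value. -/
def IsNextM (v n : V) : Prop :=
  t.pre n < t.pre v ∧ t.SameM v n ∧
    ∀ z, t.pre z < t.pre v → t.SameM v z → t.pre z ≤ t.pre n

/-- `l = lastM(v)`: the smallest vertex with the same `M`-value as `v`. -/
def IsLastM (v l : V) : Prop :=
  t.SameM v l ∧ ∀ z, t.SameM v z → t.pre l ≤ t.pre z

/-- `t` really is a DFS spanning tree of the connected multigraph `ends`. -/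
structure IsDFS : Prop where
  conn : Connected t.ends
  parent_root : t.parent t.root = t.root
  tree_ends : ∀ v, v ≠ t.root → t.ends (t.treeEdge v) = (v, t.parent v)
  treeEdge_inj : ∀ v w, v ≠ t.root → w ≠ t.root → t.treeEdge v = t.treeEdge w → v = w
  back : ∀ e, ¬ t.IsTreeEdge e → t.Anc (t.ends e).2 (t.ends e).1
  pre_inj : Function.Injective t.pre
  pre_mono : ∀ a b, t.Anc a b → t.pre a ≤ t.pre b
  pre_interval : ∀ a b : V,
    t.pre a ≤ t.pre b → t.pre b < t.pre a + {x | t.Anc a x}.ncard → t.Anc a b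

end DFSTree

/-!
The edges with exactly one end in the subtree `D(u)` of `u` are the tree edge `(u, p(u))` and
the back-edges of `B(u)`. Hence if `B(u) = {e, e'}`, deleting `{(u, p(u)), e, e'}` separates
`u` from the root. Conversely, after deleting these three edges every vertex outside `D(u)`
still reaches the root along its tree path, every vertex of `D(u)` still reaches `u`, and a
third back-edge `f ∈ B(u)` joins `D(u)` to a proper ancestor of `u`.
-/

theorem Reach.symm {ends : E → V × V} {S : Set E} {a b : V} (h : Reach ends S a b) :
    Reach ends S b a :=
  haveI : Std.Symm fun a b => ∃ f, f ∉ S ∧ (ends f = (a, b) ∨ ends f = (b, a)) :=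
    ⟨fun _ _ ⟨f, hf, hends⟩ => ⟨f, hf, hends.symm⟩⟩
  Relation.ReflTransGen.stdSymm.symm _ _ h

theorem Reach.trans {ends : E → V × V} {S : Set E} {a b c : V} (hab : Reach ends S a b)
    (hbc : Reach ends S b c) : Reach ends S a c :=
  Relation.ReflTransGen.trans hab hbc

namespace DFSTree

variable {t : DFSTree V E}

theorem Anc.refl (a : V) : t.Anc a a := Relation.ReflTransGen.refl

theorem Anc.trans {a b c : V} (hab : t.Anc a b) (hbc : t.Anc b c) : t.Anc a c :=
  Relation.ReflTransGen.trans hbc hab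

theorem parent_anc {b : V} (hb : b ≠ t.root) : t.Anc (t.parent b) b :=
  Relation.ReflTransGen.single ⟨hb, rfl⟩

theorem Anc.antisymm (ht : t.IsDFS) {a b : V} (hab : t.Anc a b) (hba : t.Anc b a) : a = b :=
  ht.pre_inj (le_antisymm (ht.pre_mono _ _ hab) (ht.pre_mono _ _ hba))

theorem eq_root_of_anc_root {a : V} (h : t.Anc a t.root) : a = t.root := by
  rcases Relation.ReflTransGen.cases_head h with h | ⟨_, ⟨hr, _⟩, _⟩
  · exact h.symm
  · exact absurd rfl hr

theorem Anc.anc_parent {a b : V} (hab : t.Anc a b) (hne : a ≠ b) : t.Anc a (t.parent b) := by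
  rcases Relation.ReflTransGen.cases_head hab with h | ⟨_, ⟨_, rfl⟩, h⟩
  · exact absurd h.symm hne
  · exact h

theorem Anc.total {a b c : V} (hac : t.Anc a c) (hbc : t.Anc b c) : t.Anc a b ∨ t.Anc b a := by
  induction hac using Relation.ReflTransGen.head_induction_on generalizing b with
  | refl => exact Or.inr hbc
  | head hstep htail ih =>
    rcases Relation.ReflTransGen.cases_head hbc with rfl | ⟨_, hstep', hbc'⟩
    · exact Or.inl (Relation.ReflTransGen.head hstep htail)
    · obtain ⟨-, rfl⟩ := hstep
      obtain ⟨-, rfl⟩ := hstep'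
      exact ih hbc'

theorem notMem_B_root {f : E} : f ∉ t.B t.root :=
  fun hf => hf.2.2.2 (eq_root_of_anc_root hf.2.2.1)

theorem eq_treeEdge_or_mem_B_of_adj (ht : t.IsDFS) {u a b : V} {f : E}
    (hf : t.ends f = (a, b) ∨ t.ends f = (b, a)) (ha : t.Anc u a) (hb : ¬ t.Anc u b) :
    (u ≠ t.root ∧ f = t.treeEdge u) ∨ f ∈ t.B u := by
  by_cases htree : t.IsTreeEdge f
  · obtain ⟨w, hw, rfl⟩ := htree
    rcases hf with hf | hf <;> rw [ht.tree_ends w hw, Prod.mk.injEq] at hf <;>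
      obtain ⟨rfl, rfl⟩ := hf
    · by_cases hwu : u = w
      · exact Or.inl ⟨hwu ▸ hw, hwu ▸ rfl⟩
      · exact absurd (ha.anc_parent hwu) hb
    · exact absurd (ha.trans (parent_anc hw)) hb
  · have hback := ht.back f htree
    rcases hf with hf | hf <;> rw [hf] at hback
    · rcases ha.total hback with hub | hbu
      · exact absurd hub hb
      · refine Or.inr ⟨htree, hf ▸ ha, hf ▸ ⟨hbu, ?_⟩⟩
        rintro rfl
        exact hb (Anc.refl _)
    · exact absurd (ha.trans hback) hb

theorem root_anc (ht : t.IsDFS) (v : V) : t.Anc t.root v := by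
  induction ht.conn t.root v with
  | refl => exact Anc.refl _
  | tail _ hstep ih =>
    obtain ⟨f, -, hf⟩ := hstep
    by_contra hv
    rcases eq_treeEdge_or_mem_B_of_adj ht hf ih hv with ⟨hr, -⟩ | hB
    · exact hr rfl
    · exact notMem_B_root hB

theorem anc_of_reach (ht : t.IsDFS) {S : Set E} {u a b : V} (hT : t.treeEdge u ∈ S)
    (hB : t.B u ⊆ S) (h : Reach t.ends S a b) (ha : t.Anc u a) : t.Anc u b := by
  induction h with
  | refl => exact ha
  | tail _ hstep ih =>
    obtain ⟨f, hfS, hf⟩ := hstep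
    by_contra hc
    rcases eq_treeEdge_or_mem_B_of_adj ht hf ih hc with ⟨-, rfl⟩ | hfB
    · exact hfS hT
    · exact hfS (hB hfB)

theorem isCutSet_of_B_subset (ht : t.IsDFS) {S : Set E} {u : V} (hu : u ≠ t.root)
    (hT : t.treeEdge u ∈ S) (hB : t.B u ⊆ S) : IsCutSet t.ends S :=
  ⟨u, t.root, fun h => hu (eq_root_of_anc_root (anc_of_reach ht hT hB h (Anc.refl u)))⟩

theorem reach_of_anc (ht : t.IsDFS) {S : Set E} {a x : V} (hax : t.Anc a x)
    (hS : ∀ y, y ≠ t.root → y ≠ a → t.Anc a y → t.Anc y x → t.treeEdge y ∉ S) :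
    Reach t.ends S x a := by
  induction hax using Relation.ReflTransGen.head_induction_on with
  | refl => exact Relation.ReflTransGen.refl
  | @head y _ hstep hpa ih =>
    obtain ⟨hy, rfl⟩ := hstep
    by_cases hya : y = a
    · subst hya
      exact Relation.ReflTransGen.refl
    have hy_S : t.treeEdge y ∉ S := hS y hy hya (Anc.trans hpa (parent_anc hy)) (Anc.refl y)
    refine Relation.ReflTransGen.head ⟨t.treeEdge y, hy_S, Or.inl (ht.tree_ends y hy)⟩ (ih ?_)
    exact fun z hz hza haz hzp => hS z hz hza haz (hzp.trans (parent_anc hy))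

theorem not_isCutSet_of_mem_B (ht : t.IsDFS) {S : Set E} {u : V} {f : E}
    (hS : ∀ y, y ≠ t.root → y ≠ u → t.treeEdge y ∉ S) (hf : f ∈ t.B u) (hfS : f ∉ S) :
    ¬ IsCutSet t.ends S := by
  have outside : ∀ x, ¬ t.Anc u x → Reach t.ends S x t.root := fun x hx =>
    reach_of_anc ht (root_anc ht x) fun y hy _ _ hyx => hS y hy fun hyu => hx (hyu ▸ hyx)
  have inside : ∀ x, t.Anc u x → Reach t.ends S x u := fun x hx =>
    reach_of_anc ht hx fun y hy hyu _ _ => hS y hy hyu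
  obtain ⟨-, hlow, hhigh, hhigh_ne⟩ := hf
  have hu_root : Reach t.ends S u t.root :=
    (inside _ hlow).symm.trans <| Relation.ReflTransGen.head ⟨f, hfS, Or.inl rfl⟩ <|
      outside _ fun h => hhigh_ne (hhigh.antisymm ht h)
  have reach_root : ∀ x, Reach t.ends S x t.root := fun x => by
    by_cases hx : t.Anc u x
    · exact (inside x hx).trans hu_root
    · exact outside x hx
  rintro ⟨v, w, hvw⟩
  exact hvw ((reach_root v).trans (reach_root w).symm)

end DFSTree

theorem one_tree_edge_two_back_edges_cut_general (t : DFSTree V E) (ht : t.IsDFS)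
    (u : V) (hu : u ≠ t.root)
    (e e' : E) (he : e ∈ t.B u) (he' : e' ∈ t.B u) :
    IsCutSet t.ends {t.treeEdge u, e, e'} ↔ t.B u = {e, e'} := by
  constructor
  · intro hcut
    refine Set.Subset.antisymm (fun f hf => ?_)
      (Set.insert_subset he (Set.singleton_subset_iff.2 he'))
    by_contra hf_ne
    refine DFSTree.not_isCutSet_of_mem_B ht ?_ hf ?_ hcut
    · rintro y hy hyu (h | h | h)
      · exact hyu (ht.treeEdge_inj y u hy hu h)
      · exact he.1 ⟨y, hy, h.symm⟩
      · exact he'.1 ⟨y, hy, h.symm⟩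
    · rintro (h | h)
      · exact hf.1 ⟨u, hu, h⟩
      · exact hf_ne h
  · intro hB
    exact DFSTree.isCutSet_of_B_subset ht hu (Set.mem_insert _ _) (hB ▸ Set.subset_insert _ _)

/-- In a 3-edge-connected graph, for `u ≠ r` and two back-edges `e, e' ∈ B(u)`,
the set `{(u, p(u)), e, e'}` is a 3-edge cut iff `B(u) = {e, e'}`. -/
theorem one_tree_edge_two_back_edges_cut (t : DFSTree V E) (ht : t.IsDFS)
    (h3 : GraphKConn t.ends 3) (u : V) (hu : u ≠ t.root)
    (e e' : E) (he : e ∈ t.B u) (he' : e' ∈ t.B u) (hne : e ≠ e') :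
    IsCutSet t.ends {t.treeEdge u, e, e'} ↔ t.B u = {e, e'} :=
  one_tree_edge_two_back_edges_cut_general t ht u hu e e' he he'
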